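/- Consider the per-round convergence-time problem with the CPU frequencies eliminated via fₙ = τ·cₙ·Dₙ/l^c (so C2 reads ζτ³cₙ³Dₙ³/(l^c)² + Eₙ ≤ Eₙᵐᵃˣ). If a feasible point (l^c, E, B, l^up) satisfies the energy constraint C2 with strict inequality for some user n₀, i.e., ζτ³c_{n₀}³D_{n₀}³/(l^c)² + E_{n₀} < E_{n₀}ᵐᵃˣ, then the point is not optimal: there exists a feasible point with strictly smaller objective value l^c + ∑ₙ lₙᵘᵖ. Consequently, at any optimal solution each user uses its full energy budget: Eₙ = Eₙᵐᵃˣ − ζτ³cₙ³Dₙ³/(l^c)² for all n. -/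
import Mathlib


open Finset

/-- Constants of the per-round convergence-time problem for `N` users. -/
structure FLParams (N : ℕ) where
  /-- bandwidth `W` -/
  W : ℝ
  /-- noise power `N₀` -/
  N0 : ℝ
  /-- hardware constant `ζ` -/
  ζ : ℝ
  /-- number of local SGD steps `τ` -/
  τ : ℝ
  /-- model dimension `d` -/
  d : ℝ
  /-- header size `m` -/
  m : ℝ
  /-- quantization error tolerance `ε` -/
  ε : ℝ
  /-- channel gains `gₙ` -/
  g : Fin N → ℝ
  /-- energy budgets `Eₙᵐᵃˣ` -/
  Emax : Fin N → ℝ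
  /-- CPU cycles per sample `cₙ` -/
  c : Fin N → ℝ
  /-- mini-batch sizes `Dₙ` -/
  D : Fin N → ℝ
  /-- maximum CPU frequencies `fₙᵐᵃˣ` -/
  fmax : Fin N → ℝ
  /-- dataset weights `pₙ` -/
  p : Fin N → ℝ
  /-- quantization constants `δₙ` -/
  δ : Fin N → ℝ

/-- The standing assumptions on the constants. -/
def FLParams.Valid {N : ℕ} (P : FLParams N) : Prop :=
  0 < P.W ∧ 0 < P.N0 ∧ 0 < P.ζ ∧ 1 ≤ P.τ ∧ 1 ≤ P.d ∧ 0 ≤ P.m ∧ 0 < P.ε ∧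
  (∀ n, 0 < P.g n) ∧ (∀ n, 0 < P.Emax n) ∧ (∀ n, 0 < P.c n) ∧ (∀ n, 0 < P.D n) ∧
  (∀ n, 0 < P.fmax n) ∧ (∀ n, 0 ≤ P.p n) ∧ (∑ n, P.p n) = 1 ∧ (∀ n, 0 ≤ P.δ n)

/-- Feasibility of a point `(l^c, E, B, l^up)` for the per-round convergence-time problem with
the CPU frequencies eliminated via `fₙ = τ cₙ Dₙ / l^c`: `l^c ≥ a₁ = maxₙ τ cₙ Dₙ / fₙᵐᵃˣ`,
positivity, and constraints C1 (rate), C2 (energy, reading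
`ζ τ³ cₙ³ Dₙ³/(l^c)² + Eₙ ≤ Eₙᵐᵃˣ`), C3 (quantization error tolerance). -/
def Feasible2 {N : ℕ} (P : FLParams N) (lc : ℝ) (E B lup : Fin N → ℝ) : Prop :=
  0 < lc ∧ (∀ n, P.τ * P.c n * P.D n / P.fmax n ≤ lc) ∧
  (∀ n, 0 ≤ E n) ∧ (∀ n, 1 ≤ B n) ∧ (∀ n, 0 < lup n) ∧
  (∀ n, P.d * (B n + 1) + P.m ≤
    lup n * P.W * Real.logb 2 (1 + P.g n * E n / (lup n * P.W * P.N0))) ∧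
  (∀ n, P.ζ * P.τ ^ 3 * (P.c n) ^ 3 * (P.D n) ^ 3 / lc ^ 2 + E n ≤ P.Emax n) ∧
  (∑ n, P.p n * (P.δ n) ^ 2 / ((2 : ℝ) ^ (B n) - 1) ^ 2 ≤ P.ε)


lemma exists_lt_of_continuousAt_gt {φ : ℝ → ℝ} {x T : ℝ} (hx : 0 < x)
    (hcont : ContinuousAt φ x) (hgt : T < φ x) :
    ∃ l', 0 < l' ∧ l' < x ∧ T < φ l' := by
  have h := hcont (Ioi_mem_nhds hgt)
  rw [Filter.mem_map, Metric.mem_nhds_iff] at h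
  obtain ⟨ε, hε, hball⟩ := h
  refine ⟨x - min (ε / 2) (x / 2), by
    have := min_le_right (ε/2) (x/2); linarith, by
    have h1 : 0 < min (ε/2) (x/2) := lt_min (by linarith) (by linarith); linarith, ?_⟩
  have : x - min (ε/2) (x/2) ∈ Metric.ball x ε := by
    rw [Metric.mem_ball, Real.dist_eq]
    have h1 : 0 < min (ε/2) (x/2) := lt_min (by linarith) (by linarith)
    have h2 := min_le_left (ε/2) (x/2)
    rw [abs_of_nonpos (by linarith)]
    linarith
  exact hball this

lemma improve {N : ℕ} (P : FLParams N) (hP : P.Valid) :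
    ∀ lc E B lup, Feasible2 P lc E B lup → ∀ n0 : Fin N,
      P.ζ * P.τ ^ 3 * (P.c n0) ^ 3 * (P.D n0) ^ 3 / lc ^ 2 + E n0 < P.Emax n0 →
      ∃ lc' E' B' lup', Feasible2 P lc' E' B' lup' ∧
        lc' + ∑ n, lup' n < lc + ∑ n, lup n := by
  obtain ⟨hW, hN0, hζ, hτ, hd, hm, hε, hg, hEmax, hc, hD, hfmax, hp, hpsum, hδ⟩ := hP
  intro lc E B lup hF n0 hslack
  obtain ⟨hlc, ha1, hE, hB, hlup, hC1, hC2, hC3⟩ := hF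
  set A := P.ζ * P.τ ^ 3 * (P.c n0) ^ 3 * (P.D n0) ^ 3 / lc ^ 2 with hA
  set Δ := P.Emax n0 - (A + E n0) with hΔdef
  have hΔ : 0 < Δ := by simp only [hΔdef]; linarith
  set e' := E n0 + Δ / 2 with he'def
  have he' : 0 < e' := by have := hE n0; simp only [he'def]; linarith
  set x := lup n0 with hxdef
  have hx : 0 < x := hlup n0
  have hden : 0 < x * P.W * P.N0 := by positivity
  set φ : ℝ → ℝ := fun l => l * P.W * Real.logb 2 (1 + P.g n0 * e' / (l * P.W * P.N0))
    with hφdef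
  set T := P.d * (B n0 + 1) + P.m with hTdef
  -- strict improvement of the rate at the old lup
  have hgt : T < φ x := by
    have h1 := hC1 n0
    have harg0 : 0 < 1 + P.g n0 * E n0 / (x * P.W * P.N0) := by
      have : 0 ≤ P.g n0 * E n0 / (x * P.W * P.N0) :=
        div_nonneg (mul_nonneg (hg n0).le (hE n0)) hden.le
      linarith
    have hlt : 1 + P.g n0 * E n0 / (x * P.W * P.N0)
        < 1 + P.g n0 * e' / (x * P.W * P.N0) := by
      have : P.g n0 * E n0 < P.g n0 * e' := by
        apply mul_lt_mul_of_pos_left _ (hg n0)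
        simp only [he'def]; linarith
      gcongr
    have hlog := Real.logb_lt_logb one_lt_two harg0 hlt
    have hxW : 0 < x * P.W := by positivity
    calc T ≤ x * P.W * Real.logb 2 (1 + P.g n0 * E n0 / (x * P.W * P.N0)) := h1
      _ < φ x := by exact mul_lt_mul_of_pos_left hlog hxW
  -- continuity of φ at x
  have hcont : ContinuousAt φ x := by
    have hinner : ContinuousAt (fun l : ℝ => 1 + P.g n0 * e' / (l * P.W * P.N0)) x := by
      apply ContinuousAt.add continuousAt_const
      exact ContinuousAt.div continuousAt_const (by fun_prop) hden.ne'
    have harg : 0 < 1 + P.g n0 * e' / (x * P.W * P.N0) := by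
      have : 0 < P.g n0 * e' / (x * P.W * P.N0) :=
        div_pos (mul_pos (hg n0) he') hden
      linarith
    have hlogcont : ContinuousAt (fun y : ℝ => Real.logb 2 y)
        (1 + P.g n0 * e' / (x * P.W * P.N0)) := by
      simp only [Real.logb]
      exact (Real.continuousAt_log harg.ne').div_const _
    have hcomp : ContinuousAt (fun l : ℝ =>
        Real.logb 2 (1 + P.g n0 * e' / (l * P.W * P.N0))) x := Filter.Tendsto.comp hlogcont hinner
    exact (continuousAt_id.mul continuousAt_const).mul hcomp
  obtain ⟨l', hl'0, hl'lt, hl'gt⟩ := exists_lt_of_continuousAt_gt hx hcont hgt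
  refine ⟨lc, Function.update E n0 e', B, Function.update lup n0 l', ?_, ?_⟩
  · refine ⟨hlc, ha1, ?_, hB, ?_, ?_, ?_, hC3⟩
    · intro n
      rcases eq_or_ne n n0 with rfl | hne
      · simp [he'.le]
      · simp [Function.update_of_ne hne, hE n]
    · intro n
      rcases eq_or_ne n n0 with rfl | hne
      · simpa using hl'0
      · simpa [Function.update_of_ne hne] using hlup n
    · intro n
      rcases eq_or_ne n n0 with rfl | hne
      · simpa using hl'gt.le
      · simpa [Function.update_of_ne hne] using hC1 n
    · intro n
      rcases eq_or_ne n n0 with rfl | hne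
      · simp only [Function.update_self]
        show A + e' ≤ P.Emax n
        have hΔd : Δ = P.Emax n - (A + E n) := hΔdef
        have he'd : e' = E n + Δ / 2 := he'def
        clear_value A Δ e'
        linarith
      · simpa [Function.update_of_ne hne] using hC2 n
  · have hsum : ∑ n, Function.update lup n0 l' n
        = l' + ∑ n ∈ univ.erase n0, lup n := by
      rw [← Finset.add_sum_erase _ _ (Finset.mem_univ n0)]
      congr 1
      · simp
      · apply Finset.sum_congr rfl
        intro n hn
        exact Function.update_of_ne (Finset.ne_of_mem_erase hn) _ _
    have hsum2 : ∑ n, lup n = lup n0 + ∑ n ∈ univ.erase n0, lup n :=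
      (Finset.add_sum_erase _ _ (Finset.mem_univ n0)).symm
    rw [hsum, hsum2]
    have : l' < lup n0 := hl'lt
    linarith

/-- If a feasible point of the reduced per-round problem satisfies the energy constraint C2
with strict inequality for some user `n₀`, then it is not optimal: a feasible point with
strictly smaller objective `l^c + ∑ₙ lₙᵘᵖ` exists. Consequently, at any optimal solution every
user exhausts its energy budget: `Eₙ = Eₙᵐᵃˣ − ζ τ³ cₙ³ Dₙ³/(l^c)²` for all `n`. -/
theorem full_energy_at_optimum {N : ℕ} (P : FLParams N) (hP : P.Valid) :
    (∀ lc E B lup, Feasible2 P lc E B lup → ∀ n0 : Fin N,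
      P.ζ * P.τ ^ 3 * (P.c n0) ^ 3 * (P.D n0) ^ 3 / lc ^ 2 + E n0 < P.Emax n0 →
      ∃ lc' E' B' lup', Feasible2 P lc' E' B' lup' ∧
        lc' + ∑ n, lup' n < lc + ∑ n, lup n) ∧
    (∀ lc E B lup, Feasible2 P lc E B lup →
      (∀ lc' E' B' lup', Feasible2 P lc' E' B' lup' →
        lc + ∑ n, lup n ≤ lc' + ∑ n, lup' n) →
      ∀ n, E n = P.Emax n - P.ζ * P.τ ^ 3 * (P.c n) ^ 3 * (P.D n) ^ 3 / lc ^ 2) := by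
  
  constructor
  · exact improve P hP
  · intro lc E B lup hF hopt n
    have hC2 := hF.2.2.2.2.2.2.1 n
    by_contra h
    have hstrict : P.ζ * P.τ ^ 3 * (P.c n) ^ 3 * (P.D n) ^ 3 / lc ^ 2 + E n < P.Emax n := by
      rcases lt_or_eq_of_le hC2 with h' | h'
      · exact h'
      · exact absurd (by linarith) h
    obtain ⟨lc', E', B', lup', hF', hlt⟩ := improve P hP lc E B lup hF n hstrict
    exact absurd (hopt lc' E' B' lup' hF') (not_le.mpr hlt)
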